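/- arXiv:2102.12377 — 2 statements merged into one kernel-verified Lean document; each statement's English description precedes it below -/
import Mathlib

section
/- Let P, Q, R, S be a pqrs-quad and let F : ℂ → ℂ be an entire function satisfying the special double confluent Heun equation ℋ[F] = 0, i.e. F″(w) + (ℓ + μ(e^{−w} − e^{w}))·F′(w) + (λ − (ℓ+1)μ·e^w)·F(w) = 0 for all w ∈ ℂ. Then the function L_B[F], defined by L_B[F](w) = e^{(1−ℓ)w}·e^{μ(e^w + e^{−w})}·(S(w+iπ)·F(w+iπ) − e^{w}·R(w+iπ)·F′(w+iπ)), also satisfies ℋ[L_B[F]] = 0 on all of ℂ. -/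
noncomputable def ipi : ℂ := (Real.pi : ℂ) * Complex.I

noncomputable def heunOp (ell lam mu : ℂ) (F : ℂ → ℂ) : ℂ → ℂ := fun w =>
  deriv (deriv F) w + (ell + mu * (Complex.exp (-w) - Complex.exp w)) * deriv F w +
    (lam - (ell + 1) * mu * Complex.exp w) * F w

noncomputable def opLB (ell mu : ℂ) (R S : ℂ → ℂ) (F : ℂ → ℂ) : ℂ → ℂ := fun w =>
  Complex.exp ((1 - ell) * w) * Complex.exp (mu * (Complex.exp w + Complex.exp (-w))) *
    (S (w + ipi) * F (w + ipi) - Complex.exp w * R (w + ipi) * deriv F (w + ipi))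

/-!
Write `L_B[F] = A · K` with the gauge factor `A = exp ((1 - ℓ) w + μ (e^w + e^{-w}))` and
`K = s f - e^w r f'`, where `p, q, r, s, f` are `P, Q, R, S, F` shifted by `iπ`. Since
`A' = (1 - ℓ + μ (e^w - e^{-w})) A`, conjugation by `A` turns `ℋ` into
`K'' + (2 - ℓ + μ (e^w - e^{-w})) K' + (λ + (1 - ℓ)(1 + μ e^w)) K`.
As `e^{w + iπ} = -e^w`, the shifted quad and the shifted Heun equation express the derivatives of
`p, q, r, s, f'` through the values `p, q, r, s, f, f'`; hence `K'` and `K''` are explicit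
combinations of these six values, and the conjugated equation for `K` becomes an identity of
Laurent polynomials in `e^w`.
-/

open Complex

theorem exp_ipi : exp ipi = -1 := by rw [ipi, exp_pi_mul_I]

theorem exp_add_ipi (x : ℂ) : exp (x + ipi) = -exp x := by
  rw [exp_add, exp_ipi, mul_neg_one]

theorem exp_neg_add_ipi (x : ℂ) : exp (-(x + ipi)) = -exp (-x) := by
  rw [exp_neg, exp_add_ipi, inv_neg, exp_neg]

theorem exp_two_mul_add_ipi (x : ℂ) : exp (2 * (x + ipi)) = exp x ^ 2 := by
  rw [two_mul, exp_add, exp_add_ipi]; ring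

structure IsPQRSQuad (ell lam mu : ℂ) (P Q R S : ℂ → ℂ) : Prop where
  differentiable_P : Differentiable ℂ P
  differentiable_Q : Differentiable ℂ Q
  differentiable_R : Differentiable ℂ R
  differentiable_S : Differentiable ℂ S
  exp_mul_deriv_P : ∀ w, exp w * deriv P w =
    (mu + (ell - 1) * exp w) * P w - Q w + exp (2 * w) * R w
  deriv_Q : ∀ w, deriv Q w = exp w * ((lam - (ell + 1) * mu * exp w) * P w + mu * Q w + S w)
  exp_mul_deriv_R : ∀ w, exp w * deriv R w =
    -(lam + mu ^ 2) * P w + exp w * (2 * (ell - 1) - mu * exp w) * R w - S w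
  exp_mul_deriv_S : ∀ w, exp w * deriv S w =
    -(lam + mu ^ 2) * Q w + exp (2 * w) * (lam - (ell + 1) * mu * exp w) * R w
      + ((ell - 1) * exp w - mu) * S w

namespace IsPQRSQuad

variable {ell lam mu : ℂ} {P Q R S : ℂ → ℂ} (h : IsPQRSQuad ell lam mu P Q R S) (x : ℂ)
include h

theorem hasDerivAt_P_add_ipi : HasDerivAt (fun y => P (y + ipi))
    (-exp (-x) * ((mu - (ell - 1) * exp x) * P (x + ipi) - Q (x + ipi)) -
      exp x * R (x + ipi)) x := by
  refine ((h.differentiable_P _).hasDerivAt.comp_add_const x ipi).congr_deriv ?_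
  have := h.exp_mul_deriv_P (x + ipi)
  rw [exp_add_ipi, exp_two_mul_add_ipi] at this
  rw [exp_neg]
  field_simp
  linear_combination -this

theorem hasDerivAt_Q_add_ipi : HasDerivAt (fun y => Q (y + ipi))
    (-exp x * ((lam + (ell + 1) * mu * exp x) * P (x + ipi) + mu * Q (x + ipi) +
      S (x + ipi))) x := by
  refine ((h.differentiable_Q _).hasDerivAt.comp_add_const x ipi).congr_deriv ?_
  rw [h.deriv_Q, exp_add_ipi]
  ring

theorem hasDerivAt_R_add_ipi : HasDerivAt (fun y => R (y + ipi))
    (exp (-x) * ((lam + mu ^ 2) * P (x + ipi) + S (x + ipi)) +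
      (2 * (ell - 1) + mu * exp x) * R (x + ipi)) x := by
  refine ((h.differentiable_R _).hasDerivAt.comp_add_const x ipi).congr_deriv ?_
  have := h.exp_mul_deriv_R (x + ipi)
  rw [exp_add_ipi] at this
  rw [exp_neg]
  field_simp
  linear_combination -this

theorem hasDerivAt_S_add_ipi : HasDerivAt (fun y => S (y + ipi))
    (exp (-x) * ((lam + mu ^ 2) * Q (x + ipi) + ((ell - 1) * exp x + mu) * S (x + ipi)) -
      exp x * (lam + (ell + 1) * mu * exp x) * R (x + ipi)) x := by
  refine ((h.differentiable_S _).hasDerivAt.comp_add_const x ipi).congr_deriv ?_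
  have := h.exp_mul_deriv_S (x + ipi)
  rw [exp_add_ipi, exp_two_mul_add_ipi] at this
  rw [exp_neg]
  field_simp
  linear_combination -this

end IsPQRSQuad

theorem hasDerivAt_deriv_add_ipi_of_heunOp_eq_zero {ell lam mu : ℂ} {F : ℂ → ℂ}
    (hF : Differentiable ℂ F) {x : ℂ} (hHeun : heunOp ell lam mu F (x + ipi) = 0) :
    HasDerivAt (fun y => deriv F (y + ipi))
      (-(ell + mu * (exp x - exp (-x))) * deriv F (x + ipi) -
        (lam + (ell + 1) * mu * exp x) * F (x + ipi)) x := by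
  refine ((hF.deriv _).hasDerivAt.comp_add_const x ipi).congr_deriv ?_
  rw [heunOp, exp_add_ipi, exp_neg_add_ipi] at hHeun
  linear_combination hHeun

theorem hasDerivAt_exp_neg (x : ℂ) : HasDerivAt (fun y => exp (-y)) (-exp (-x)) x := by
  simpa using (hasDerivAt_neg x).cexp

noncomputable def opLBFactor (ell mu : ℂ) : ℂ → ℂ := fun w =>
  exp ((1 - ell) * w) * exp (mu * (exp w + exp (-w)))

noncomputable def opLBCore (R S F : ℂ → ℂ) : ℂ → ℂ := fun w =>
  S (w + ipi) * F (w + ipi) - exp w * R (w + ipi) * deriv F (w + ipi)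

theorem opLB_eq_opLBFactor_mul_opLBCore (ell mu : ℂ) (R S F : ℂ → ℂ) :
    opLB ell mu R S F = fun w => opLBFactor ell mu w * opLBCore R S F w :=
  rfl

theorem hasDerivAt_opLBFactor (ell mu x : ℂ) :
    HasDerivAt (opLBFactor ell mu)
      ((1 - ell + mu * (exp x - exp (-x))) * opLBFactor ell mu x) x := by
  have h₁ := ((hasDerivAt_id x).const_mul (1 - ell)).cexp
  have h₂ := (((hasDerivAt_exp x).add (hasDerivAt_exp_neg x)).const_mul mu).cexp
  refine (h₁.mul h₂).congr_deriv ?_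
  simp only [opLBFactor, id, Pi.add_apply]
  ring

noncomputable def conjHeunOp (ell lam mu : ℂ) (K : ℂ → ℂ) : ℂ → ℂ := fun w =>
  deriv (deriv K) w + (2 - ell + mu * (exp w - exp (-w))) * deriv K w +
    (lam + (1 - ell) * (1 + mu * exp w)) * K w

theorem heunOp_opLBFactor_mul {ell lam mu : ℂ} {K : ℂ → ℂ} (hK : Differentiable ℂ K)
    (w : ℂ) :
    heunOp ell lam mu (fun x => opLBFactor ell mu x * K x) w =
      opLBFactor ell mu w * conjHeunOp ell lam mu K w := by
  have hC : ∀ x, HasDerivAt (fun y => 1 - ell + mu * (exp y - exp (-y)))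
      (mu * (exp x + exp (-x))) x := fun x => by
    simpa [sub_neg_eq_add] using
      (((hasDerivAt_exp x).sub (hasDerivAt_exp_neg x)).const_mul mu).const_add (1 - ell)
  have hderiv : deriv (fun x => opLBFactor ell mu x * K x) = fun x =>
      (1 - ell + mu * (exp x - exp (-x))) * opLBFactor ell mu x * K x +
        opLBFactor ell mu x * deriv K x :=
    funext fun x =>
      ((hasDerivAt_opLBFactor ell mu x).mul (hK x).hasDerivAt).deriv.trans (by ring)
  have hderiv₂ : HasDerivAt (fun x =>
      (1 - ell + mu * (exp x - exp (-x))) * opLBFactor ell mu x * K x +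
        opLBFactor ell mu x * deriv K x) _ w :=
    (((hC w).mul (hasDerivAt_opLBFactor ell mu w)).mul (hK w).hasDerivAt).add
      ((hasDerivAt_opLBFactor ell mu w).mul (hK.deriv w).hasDerivAt)
  rw [heunOp, hderiv, hderiv₂.deriv, conjHeunOp]
  simp only [Pi.mul_apply]
  ring

noncomputable def opLBCoreDeriv (ell lam mu : ℂ) (P Q R S F : ℂ → ℂ) : ℂ → ℂ := fun y =>
  exp (-y) * ((lam + mu ^ 2) * Q (y + ipi) + mu * S (y + ipi)) * F (y + ipi) +
    (ell - 1) * S (y + ipi) * F (y + ipi) -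
    ((lam + mu ^ 2) * P (y + ipi) + (mu + (ell - 1) * exp y) * R (y + ipi)) *
      deriv F (y + ipi)

namespace IsPQRSQuad

variable {ell lam mu : ℂ} {P Q R S F : ℂ → ℂ} (h : IsPQRSQuad ell lam mu P Q R S)
  (hF : Differentiable ℂ F) (hHeun : ∀ w, heunOp ell lam mu F w = 0)
include h hF hHeun

theorem hasDerivAt_opLBCore (x : ℂ) :
    HasDerivAt (opLBCore R S F) (opLBCoreDeriv ell lam mu P Q R S F x) x := by
  refine (((h.hasDerivAt_S_add_ipi x).mul ((hF _).hasDerivAt.comp_add_const x ipi)).sub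
    (((hasDerivAt_exp x).mul (h.hasDerivAt_R_add_ipi x)).mul
      (hasDerivAt_deriv_add_ipi_of_heunOp_eq_zero hF (hHeun _)))).congr_deriv ?_
  simp only [opLBCoreDeriv, Pi.mul_apply]
  rw [exp_neg]
  field_simp
  ring

theorem deriv_opLBCore : deriv (opLBCore R S F) = opLBCoreDeriv ell lam mu P Q R S F :=
  funext fun x => (h.hasDerivAt_opLBCore hF hHeun x).deriv

theorem conjHeunOp_opLBCore (w : ℂ) : conjHeunOp ell lam mu (opLBCore R S F) w = 0 := by
  have hFw := (hF _).hasDerivAt.comp_add_const w ipi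
  have hF'w := hasDerivAt_deriv_add_ipi_of_heunOp_eq_zero hF (hHeun (w + ipi))
  have hderiv₂ : HasDerivAt (opLBCoreDeriv ell lam mu P Q R S F) _ w :=
    (((((hasDerivAt_exp_neg w).mul (((h.hasDerivAt_Q_add_ipi w).const_mul (lam + mu ^ 2)).add
      ((h.hasDerivAt_S_add_ipi w).const_mul mu))).mul hFw).add
      (((h.hasDerivAt_S_add_ipi w).const_mul (ell - 1)).mul hFw)).sub
      ((((h.hasDerivAt_P_add_ipi w).const_mul (lam + mu ^ 2)).add
        ((((hasDerivAt_exp w).const_mul (ell - 1)).const_add mu).mul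
          (h.hasDerivAt_R_add_ipi w))).mul hF'w))
  rw [conjHeunOp, h.deriv_opLBCore hF hHeun, hderiv₂.deriv]
  simp only [opLBCoreDeriv, opLBCore, Pi.add_apply, Pi.mul_apply]
  rw [exp_neg]
  field_simp
  ring

end IsPQRSQuad

theorem statement_9_general (ell lam mu : ℂ) (P Q R S : ℂ → ℂ)
    (hP : Differentiable ℂ P) (hQ : Differentiable ℂ Q)
    (hR : Differentiable ℂ R) (hS : Differentiable ℂ S)
    (hsys1 : ∀ w : ℂ, Complex.exp w * deriv P w =
      (mu + (ell - 1) * Complex.exp w) * P w - Q w + Complex.exp (2 * w) * R w)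
    (hsys2 : ∀ w : ℂ, deriv Q w =
      Complex.exp w * ((lam - (ell + 1) * mu * Complex.exp w) * P w + mu * Q w + S w))
    (hsys3 : ∀ w : ℂ, Complex.exp w * deriv R w =
      -(lam + mu ^ 2) * P w + Complex.exp w * (2 * (ell - 1) - mu * Complex.exp w) * R w - S w)
    (hsys4 : ∀ w : ℂ, Complex.exp w * deriv S w =
      -(lam + mu ^ 2) * Q w + Complex.exp (2 * w) * (lam - (ell + 1) * mu * Complex.exp w) * R w
        + ((ell - 1) * Complex.exp w - mu) * S w)
    (F : ℂ → ℂ) (hF : Differentiable ℂ F)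
    (hHeun : ∀ w : ℂ, heunOp ell lam mu F w = 0) :
    ∀ w : ℂ, heunOp ell lam mu (opLB ell mu R S F) w = 0 := by
  have h : IsPQRSQuad ell lam mu P Q R S := ⟨hP, hQ, hR, hS, hsys1, hsys2, hsys3, hsys4⟩
  have hK : Differentiable ℂ (opLBCore R S F) :=
    fun x => (h.hasDerivAt_opLBCore hF hHeun x).differentiableAt
  intro w
  rw [opLB_eq_opLBFactor_mul_opLBCore, heunOp_opLBFactor_mul hK,
    h.conjHeunOp_opLBCore hF hHeun, mul_zero]

theorem statement_9 (ell lam mu : ℂ) (P Q R S : ℂ → ℂ)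
    (hP : Differentiable ℂ P) (hQ : Differentiable ℂ Q)
    (hR : Differentiable ℂ R) (hS : Differentiable ℂ S)
    (hsys1 : ∀ w : ℂ, Complex.exp w * deriv P w =
      (mu + (ell - 1) * Complex.exp w) * P w - Q w + Complex.exp (2 * w) * R w)
    (hsys2 : ∀ w : ℂ, deriv Q w =
      Complex.exp w * ((lam - (ell + 1) * mu * Complex.exp w) * P w + mu * Q w + S w))
    (hsys3 : ∀ w : ℂ, Complex.exp w * deriv R w =
      -(lam + mu ^ 2) * P w + Complex.exp w * (2 * (ell - 1) - mu * Complex.exp w) * R w - S w)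
    (hsys4 : ∀ w : ℂ, Complex.exp w * deriv S w =
      -(lam + mu ^ 2) * Q w + Complex.exp (2 * w) * (lam - (ell + 1) * mu * Complex.exp w) * R w
        + ((ell - 1) * Complex.exp w - mu) * S w)
    (F : ℂ → ℂ) (hF : Differentiable ℂ F) (hF' : Differentiable ℂ (deriv F))
    (hHeun : ∀ w : ℂ, heunOp ell lam mu F w = 0) :
    ∀ w : ℂ, heunOp ell lam mu (opLB ell mu R S F) w = 0 :=
  statement_9_general ell lam mu P Q R S hP hQ hR hS hsys1 hsys2 hsys3 hsys4 F hF hHeun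
end

section
/- Assume λ + μ² ≠ 0. Let P, Q, R, S be a pqrs-quad that additionally satisfies the A-relations (for every w ∈ ℂ: P(iπ−w) = −e^{iℓπ}·e^{2(1−ℓ)w}·P(w); Q(iπ−w) = e^{iℓπ}·e^{−2ℓw}·(μ·P(w) + e^{2w}·R(w)); R(iπ−w) = e^{iℓπ}·e^{2(1−ℓ)w}·(μ·e^{2w}·P(w) + Q(w)); S(iπ−w) = −e^{iℓπ}·e^{−2ℓw}·(μ·(μ·e^{2w}·P(w) + Q(w)) + e^{2w}·(μ·e^{2w}·R(w) + S(w)))), and let F be an entire function with ℋ[F] = 0. Then L_A is a quasi-involution: for every w ∈ ℂ, L_A[L_A[F]](w) = −e^{iℓπ}·𝔇·F(w), where 𝔇 = P(0)·S(0) − Q(0)·R(0) is the (constant) value of the first integral. -/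
noncomputable def opLA (mu : ℂ) (P Q : ℂ → ℂ) (F : ℂ → ℂ) : ℂ → ℂ := fun w =>
  Complex.exp (mu * (Complex.exp w + Complex.exp (-w))) *
    (Q (ipi - w) * F (ipi - w) - Complex.exp (-w) * P (ipi - w) * deriv F (ipi - w))

/-!
Write σ w = iπ − w, so that e^{σ w} = −e^{−w} and e^{−σ w} = −e^{w}. Then
L_A[F](σ y) = e^{−μ(e^y + e^{−y})} · K(y) with K = Q·F + e^y·P·F′, and the gauge factors cancel
in L_A[L_A[F]](w), which becomes an expression in K(w) and K′(w). By the first two equations of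
the quad and the Heun equation, K′ = e^y(μQ + S)F + e^{2y}(μP + R)F′ contains no F″. Substituting
this and the A-relations for P(σ w), Q(σ w), the F′-terms cancel and the coefficient of F is
−e^{iℓπ} e^{2(1−ℓ)w}(PS − QR)(w), which is −e^{iℓπ} 𝔇 because the first integral is constant.
-/

open Complex

structure IsPQRSQuad_s10 (ell lam mu : ℂ) (P Q R S : ℂ → ℂ) : Prop where
  differentiable_P : Differentiable ℂ P
  differentiable_Q : Differentiable ℂ Q
  differentiable_R : Differentiable ℂ R
  differentiable_S : Differentiable ℂ S
  deriv_P : ∀ w, exp w * deriv P w = (mu + (ell - 1) * exp w) * P w - Q w + exp (2 * w) * R w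
  deriv_Q : ∀ w, deriv Q w = exp w * ((lam - (ell + 1) * mu * exp w) * P w + mu * Q w + S w)
  deriv_R : ∀ w, exp w * deriv R w =
    -(lam + mu ^ 2) * P w + exp w * (2 * (ell - 1) - mu * exp w) * R w - S w
  deriv_S : ∀ w, exp w * deriv S w =
    -(lam + mu ^ 2) * Q w + exp (2 * w) * (lam - (ell + 1) * mu * exp w) * R w
      + ((ell - 1) * exp w - mu) * S w

lemma exp_two_mul_eq_sq (w : ℂ) : exp (2 * w) = exp w ^ 2 := by
  rw [two_mul, exp_add, sq]

lemma exp_ipi_sub (w : ℂ) : exp (ipi - w) = -exp (-w) := by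
  rw [sub_eq_add_neg, exp_add, ipi, exp_pi_mul_I, neg_one_mul]

lemma exp_neg_ipi_sub (w : ℂ) : exp (-(ipi - w)) = -exp w := by
  rw [neg_sub, sub_eq_add_neg, exp_add, exp_neg ipi, ipi, exp_pi_mul_I]
  ring

namespace IsPQRSQuad_s10

variable {ell lam mu : ℂ} {P Q R S : ℂ → ℂ}

lemma hasDerivAt_firstIntegral (h : IsPQRSQuad_s10 ell lam mu P Q R S) (w : ℂ) :
    HasDerivAt (fun w => exp (2 * (1 - ell) * w) * (P w * S w - Q w * R w)) 0 w := by
  have hraw := (((hasDerivAt_id w).const_mul (2 * (1 - ell))).cexp).mul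
    ((((h.differentiable_P w).hasDerivAt).mul (h.differentiable_S w).hasDerivAt).sub
      (((h.differentiable_Q w).hasDerivAt).mul (h.differentiable_R w).hasDerivAt))
  refine hraw.congr_deriv ?_
  have h1 := h.deriv_P w
  have h2 := h.deriv_Q w
  have h3 := h.deriv_R w
  have h4 := h.deriv_S w
  rw [exp_two_mul_eq_sq] at h1 h4
  refine mul_left_cancel₀ (exp_ne_zero w) ?_
  simp only [id, Pi.sub_apply, Pi.mul_apply, mul_zero]
  linear_combination (exp (2 * (1 - ell) * w)) *
    (S w * h1 - exp w * R w * h2 - Q w * h3 + P w * h4)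

lemma firstIntegral_eq (h : IsPQRSQuad_s10 ell lam mu P Q R S) (w : ℂ) :
    exp (2 * (1 - ell) * w) * (P w * S w - Q w * R w) = P 0 * S 0 - Q 0 * R 0 := by
  simpa using is_const_of_deriv_eq_zero (fun x => (h.hasDerivAt_firstIntegral x).differentiableAt)
    (fun x => (h.hasDerivAt_firstIntegral x).deriv) w 0

end IsPQRSQuad_s10

noncomputable def reflectedOpLA (P Q F : ℂ → ℂ) (y : ℂ) : ℂ :=
  Q y * F y + exp y * P y * deriv F y

lemma opLA_apply_ipi_sub (mu : ℂ) (P Q F : ℂ → ℂ) (y : ℂ) :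
    opLA mu P Q F (ipi - y) = exp (-(mu * (exp y + exp (-y)))) * reflectedOpLA P Q F y := by
  rw [opLA, sub_sub_cancel, exp_ipi_sub, exp_neg_ipi_sub, reflectedOpLA,
    show mu * (-exp (-y) + -exp y) = -(mu * (exp y + exp (-y))) by ring]
  ring

lemma hasDerivAt_reflectedOpLA {ell lam mu : ℂ} {P Q R S F : ℂ → ℂ}
    (hP : Differentiable ℂ P) (hQ : Differentiable ℂ Q)
    (hsys1 : ∀ w, exp w * deriv P w = (mu + (ell - 1) * exp w) * P w - Q w + exp (2 * w) * R w)
    (hsys2 : ∀ w, deriv Q w = exp w * ((lam - (ell + 1) * mu * exp w) * P w + mu * Q w + S w))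
    (hF : Differentiable ℂ F) (hF' : Differentiable ℂ (deriv F))
    (hHeun : ∀ w, heunOp ell lam mu F w = 0) (y : ℂ) :
    HasDerivAt (reflectedOpLA P Q F)
      (exp y * (mu * Q y + S y) * F y + exp (2 * y) * (mu * P y + R y) * deriv F y) y := by
  have hraw := ((hQ y).hasDerivAt.mul (hF y).hasDerivAt).add
    (((hasDerivAt_exp y).mul (hP y).hasDerivAt).mul (hF' y).hasDerivAt)
  refine hraw.congr_deriv ?_
  have hu : exp y * exp (-y) = 1 := by rw [← exp_add, add_neg_cancel, exp_zero]
  have h1 := hsys1 y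
  have h2 := hsys2 y
  have hH := hHeun y
  rw [heunOp] at hH
  rw [exp_two_mul_eq_sq] at h1 ⊢
  simp only [Pi.mul_apply]
  linear_combination deriv F y * h1 + F y * h2 + exp y * P y * hH
    - mu * P y * deriv F y * hu

lemma opLA_opLA_apply (mu : ℂ) (P Q F : ℂ → ℂ) (w : ℂ)
    (hK : DifferentiableAt ℂ (reflectedOpLA P Q F) w) :
    opLA mu P Q (opLA mu P Q F) w =
      Q (ipi - w) * reflectedOpLA P Q F w + exp (-w) * P (ipi - w) *
        (deriv (reflectedOpLA P Q F) w - mu * (exp w - exp (-w)) * reflectedOpLA P Q F w) := by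
  set K := reflectedOpLA P Q F
  set E : ℂ → ℂ := fun y => exp (-(mu * (exp y + exp (-y))))
  have hE : HasDerivAt E (E w * -(mu * (exp w + exp (-w) * -1))) w :=
    (((hasDerivAt_exp w).add (hasDerivAt_id w).neg.cexp).const_mul mu).neg.cexp
  have hLA : opLA mu P Q F = fun x => E (ipi - x) * K (ipi - x) := by
    funext x
    rw [← opLA_apply_ipi_sub, sub_sub_cancel]
  have hderiv : deriv (opLA mu P Q F) (ipi - w) =
      -(E w * -(mu * (exp w + exp (-w) * -1)) * K w + E w * deriv K w) := by
    rw [hLA, deriv_comp_const_sub (f := fun y => E y * K y), sub_sub_cancel]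
    exact congrArg Neg.neg (hE.mul hK.hasDerivAt).deriv
  have hEE : exp (mu * (exp w + exp (-w))) * E w = 1 := by
    rw [← exp_add, add_neg_cancel, exp_zero]
  rw [opLA, hderiv, opLA_apply_ipi_sub]
  linear_combination (Q (ipi - w) * K w + exp (-w) * P (ipi - w) *
    (deriv K w - mu * (exp w - exp (-w)) * K w)) * hEE

theorem statement_10_general (ell lam mu : ℂ) (P Q R S : ℂ → ℂ)
    (hP : Differentiable ℂ P) (hQ : Differentiable ℂ Q)
    (hR : Differentiable ℂ R) (hS : Differentiable ℂ S)
    (hsys1 : ∀ w : ℂ, Complex.exp w * deriv P w =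
      (mu + (ell - 1) * Complex.exp w) * P w - Q w + Complex.exp (2 * w) * R w)
    (hsys2 : ∀ w : ℂ, deriv Q w =
      Complex.exp w * ((lam - (ell + 1) * mu * Complex.exp w) * P w + mu * Q w + S w))
    (hsys3 : ∀ w : ℂ, Complex.exp w * deriv R w =
      -(lam + mu ^ 2) * P w + Complex.exp w * (2 * (ell - 1) - mu * Complex.exp w) * R w - S w)
    (hsys4 : ∀ w : ℂ, Complex.exp w * deriv S w =
      -(lam + mu ^ 2) * Q w + Complex.exp (2 * w) * (lam - (ell + 1) * mu * Complex.exp w) * R w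
        + ((ell - 1) * Complex.exp w - mu) * S w)
    (hA : ∀ w : ℂ,
      P (ipi - w) = -Complex.exp (Complex.I * ell * (Real.pi : ℂ)) *
        Complex.exp (2 * (1 - ell) * w) * P w ∧
      Q (ipi - w) = Complex.exp (Complex.I * ell * (Real.pi : ℂ)) *
        Complex.exp (-(2 * ell) * w) * (mu * P w + Complex.exp (2 * w) * R w) ∧
      R (ipi - w) = Complex.exp (Complex.I * ell * (Real.pi : ℂ)) *
        Complex.exp (2 * (1 - ell) * w) * (mu * Complex.exp (2 * w) * P w + Q w) ∧
      S (ipi - w) = -Complex.exp (Complex.I * ell * (Real.pi : ℂ)) *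
        Complex.exp (-(2 * ell) * w) *
        (mu * (mu * Complex.exp (2 * w) * P w + Q w) +
          Complex.exp (2 * w) * (mu * Complex.exp (2 * w) * R w + S w)))
    (F : ℂ → ℂ) (hF : Differentiable ℂ F) (hF' : Differentiable ℂ (deriv F))
    (hHeun : ∀ w : ℂ, heunOp ell lam mu F w = 0) :
    ∀ w : ℂ,
      opLA mu P Q (opLA mu P Q F) w =
        -Complex.exp (Complex.I * ell * (Real.pi : ℂ)) * (P 0 * S 0 - Q 0 * R 0) * F w := by
  intro w
  have hquad : IsPQRSQuad_s10 ell lam mu P Q R S := ⟨hP, hQ, hR, hS, hsys1, hsys2, hsys3, hsys4⟩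
  have hK := hasDerivAt_reflectedOpLA hP hQ hsys1 hsys2 hF hF' hHeun w
  obtain ⟨hPσ, hQσ, -, -⟩ := hA w
  have hexp : exp (-(2 * ell) * w) * exp w ^ 2 = exp (2 * (1 - ell) * w) := by
    rw [sq, ← exp_add, ← exp_add]
    ring_nf
  have hu : exp w * exp (-w) = 1 := by rw [← exp_add, add_neg_cancel, exp_zero]
  rw [opLA_opLA_apply mu P Q F w hK.differentiableAt, hK.deriv, hPσ, hQσ,
    ← hquad.firstIntegral_eq w, reflectedOpLA, exp_two_mul_eq_sq, ← hexp]
  set c := exp (I * ell * Real.pi)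
  set b := exp (-(2 * ell) * w)
  set u := exp w
  linear_combination (-c * b * u * P w * (u * (mu * Q w + S w) * F w
      + u ^ 2 * (mu * P w + R w) * deriv F w - mu * u * (Q w * F w + u * P w * deriv F w))
    - c * b * P w * mu * (u * exp (-w) + 1) * (Q w * F w + u * P w * deriv F w)) * hu

theorem statement_10 (ell lam mu : ℂ) (hne : lam + mu ^ 2 ≠ 0) (P Q R S : ℂ → ℂ)
    (hP : Differentiable ℂ P) (hQ : Differentiable ℂ Q)
    (hR : Differentiable ℂ R) (hS : Differentiable ℂ S)
    (hsys1 : ∀ w : ℂ, Complex.exp w * deriv P w =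
      (mu + (ell - 1) * Complex.exp w) * P w - Q w + Complex.exp (2 * w) * R w)
    (hsys2 : ∀ w : ℂ, deriv Q w =
      Complex.exp w * ((lam - (ell + 1) * mu * Complex.exp w) * P w + mu * Q w + S w))
    (hsys3 : ∀ w : ℂ, Complex.exp w * deriv R w =
      -(lam + mu ^ 2) * P w + Complex.exp w * (2 * (ell - 1) - mu * Complex.exp w) * R w - S w)
    (hsys4 : ∀ w : ℂ, Complex.exp w * deriv S w =
      -(lam + mu ^ 2) * Q w + Complex.exp (2 * w) * (lam - (ell + 1) * mu * Complex.exp w) * R w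
        + ((ell - 1) * Complex.exp w - mu) * S w)
    (hA : ∀ w : ℂ,
      P (ipi - w) = -Complex.exp (Complex.I * ell * (Real.pi : ℂ)) *
        Complex.exp (2 * (1 - ell) * w) * P w ∧
      Q (ipi - w) = Complex.exp (Complex.I * ell * (Real.pi : ℂ)) *
        Complex.exp (-(2 * ell) * w) * (mu * P w + Complex.exp (2 * w) * R w) ∧
      R (ipi - w) = Complex.exp (Complex.I * ell * (Real.pi : ℂ)) *
        Complex.exp (2 * (1 - ell) * w) * (mu * Complex.exp (2 * w) * P w + Q w) ∧
      S (ipi - w) = -Complex.exp (Complex.I * ell * (Real.pi : ℂ)) *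
        Complex.exp (-(2 * ell) * w) *
        (mu * (mu * Complex.exp (2 * w) * P w + Q w) +
          Complex.exp (2 * w) * (mu * Complex.exp (2 * w) * R w + S w)))
    (F : ℂ → ℂ) (hF : Differentiable ℂ F) (hF' : Differentiable ℂ (deriv F))
    (hHeun : ∀ w : ℂ, heunOp ell lam mu F w = 0) :
    ∀ w : ℂ,
      opLA mu P Q (opLA mu P Q F) w =
        -Complex.exp (Complex.I * ell * (Real.pi : ℂ)) * (P 0 * S 0 - Q 0 * R 0) * F w :=
  statement_10_general ell lam mu P Q R S hP hQ hR hS hsys1 hsys2 hsys3 hsys4 hA F hF hF' hHeun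
end
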